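/- arXiv:2404.10624 — 2 statements merged into one kernel-verified Lean document; each statement's English description precedes it below -/
import Mathlib

section
/- For all natural numbers k and l, the Hermite functions are orthonormal in L^2(ℝ): ∫_ℝ h_k(x) h_l(x) dx = δ_{kl}, where δ_{kl} is the Kronecker delta (equal to 1 if k = l and 0 otherwise). -/
/-! Writing `H_k(x) e^{-x²} = (-1)^k (d/dx)^k e^{-x²}` (Rodrigues' formula) and integrating by
parts `l` times moves all derivatives onto the polynomial:
`∫ p H_l e^{-x²} = ∫ p^{(l)} e^{-x²}` for every polynomial `p`. Since `H_k` has degree `k` and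
leading coefficient `2^k`, taking `p = H_k` gives `0` for `k < l` and `2^k k! √π` for `k = l`,
which is exactly the square of the normalising constant of `h_k`. -/

open Real MeasureTheory

/-- The `k`-th physicists' Hermite polynomial (as a function):
`H_k(x) = (-1)^k e^{x²} (d^k/dx^k) e^{-x²}`. -/
noncomputable def hermitePoly (k : ℕ) (x : ℝ) : ℝ :=
  (-1 : ℝ) ^ k * Real.exp (x ^ 2) * iteratedDeriv k (fun y : ℝ => Real.exp (-y ^ 2)) x

/-- The `k`-th Hermite function `h_k(x) = (2^k k! √π)^{-1/2} H_k(x) e^{-x²/2}`. -/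
noncomputable def hermiteFun (k : ℕ) (x : ℝ) : ℝ :=
  (Real.sqrt (2 ^ k * (Nat.factorial k) * Real.sqrt π))⁻¹ * hermitePoly k x *
    Real.exp (-x ^ 2 / 2)

open Polynomial

noncomputable def physHermite : ℕ → ℝ[X]
  | 0 => 1
  | n + 1 => 2 * (X * physHermite n) - derivative (physHermite n)

lemma natDegree_physHermite_le (n : ℕ) : (physHermite n).natDegree ≤ n := by
  induction n with
  | zero => simp [physHermite]
  | succ n ih =>
    refine (natDegree_sub_le _ _).trans (max_le ?_ ?_)
    · calc (2 * (X * physHermite n)).natDegree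
          ≤ (X * physHermite n).natDegree := natDegree_mul_le.trans (by simp)
        _ ≤ 1 + n := natDegree_mul_le.trans (by simpa using ih)
        _ = n + 1 := add_comm 1 n
    · exact (natDegree_derivative_le _).trans (by omega)

lemma coeff_physHermite_self (n : ℕ) : (physHermite n).coeff n = 2 ^ n := by
  induction n with
  | zero => simp [physHermite]
  | succ n ih =>
    have h : (physHermite n).coeff (n + 2) = 0 :=
      coeff_eq_zero_of_natDegree_lt ((natDegree_physHermite_le n).trans_lt (by omega))
    simp only [physHermite, coeff_sub, coeff_ofNat_mul, coeff_X_mul, ih, coeff_derivative, h,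
      zero_mul, sub_zero, pow_succ]
    ring

lemma iterate_derivative_physHermite_self (n : ℕ) :
    derivative^[n] (physHermite n) = C ((2 : ℝ) ^ n * n.factorial) := by
  have hdeg : (derivative^[n] (physHermite n)).natDegree ≤ 0 :=
    (natDegree_iterate_derivative _ _).trans (by have := natDegree_physHermite_le n; omega)
  rw [eq_C_of_natDegree_le_zero hdeg, coeff_iterate_derivative, zero_add, coeff_physHermite_self,
    Nat.descFactorial_self, nsmul_eq_mul, mul_comm]

lemma hasDerivAt_exp_neg_sq (x : ℝ) :
    HasDerivAt (fun y : ℝ => exp (-y ^ 2)) (-2 * x * exp (-x ^ 2)) x := by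
  simpa [mul_comm] using ((hasDerivAt_pow 2 x).fun_neg).exp

lemma iteratedDeriv_exp_neg_sq (n : ℕ) (x : ℝ) :
    iteratedDeriv n (fun y : ℝ => exp (-y ^ 2)) x
      = (-1) ^ n * (physHermite n).eval x * exp (-x ^ 2) := by
  induction n generalizing x with
  | zero => simp [physHermite]
  | succ n ih =>
    rw [iteratedDeriv_succ, funext ih]
    refine ((((physHermite n).hasDerivAt x).const_mul _).fun_mul
      (hasDerivAt_exp_neg_sq x)).deriv.trans ?_
    simp only [physHermite, eval_sub, eval_mul, eval_ofNat, eval_X, pow_succ]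
    ring

lemma hermitePoly_eq_eval_physHermite (k : ℕ) (x : ℝ) :
    hermitePoly k x = (physHermite k).eval x := by
  have hsign : ((-1 : ℝ) ^ k) * (-1) ^ k = 1 := by rw [← mul_pow]; simp
  have hexp : exp (x ^ 2) * exp (-x ^ 2) = 1 := by rw [← exp_add, add_neg_cancel, exp_zero]
  rw [hermitePoly, iteratedDeriv_exp_neg_sq]
  linear_combination (physHermite k).eval x * (exp (x ^ 2) * exp (-x ^ 2) * hsign + hexp)

lemma integrable_eval_mul_exp_neg_sq (p : ℝ[X]) :
    Integrable fun x : ℝ => p.eval x * exp (-x ^ 2) := by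
  induction p using Polynomial.induction_on' with
  | add p q hp hq => simpa [add_mul] using hp.fun_add hq
  | monomial n a =>
    have h := integrable_rpow_mul_exp_neg_mul_sq (b := 1) one_pos
      (s := n) ((neg_one_lt_zero).trans_le n.cast_nonneg)
    simp only [rpow_natCast, neg_mul, one_mul] at h
    simpa [mul_assoc] using h.const_mul a

lemma integrable_eval_mul_iteratedDeriv_exp_neg_sq (p : ℝ[X]) (m : ℕ) :
    Integrable fun x : ℝ => p.eval x * iteratedDeriv m (fun y : ℝ => exp (-y ^ 2)) x := by
  simp_rw [iteratedDeriv_exp_neg_sq]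
  refine ((integrable_eval_mul_exp_neg_sq (p * physHermite m)).const_mul ((-1) ^ m)).congr
    (.of_forall fun x => ?_)
  simp only [eval_mul]
  ring

lemma integral_eval_mul_iteratedDeriv_exp_neg_sq (p : ℝ[X]) (l : ℕ) :
    ∫ x : ℝ, p.eval x * iteratedDeriv l (fun y : ℝ => exp (-y ^ 2)) x
      = (-1) ^ l * ∫ x : ℝ, (derivative^[l] p).eval x * exp (-x ^ 2) := by
  induction l generalizing p with
  | zero => simp
  | succ l ih =>
    have hsmooth : ContDiff ℝ ⊤ fun y : ℝ => exp (-y ^ 2) := by fun_prop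
    have hderiv (x : ℝ) : HasDerivAt (iteratedDeriv l fun y : ℝ => exp (-y ^ 2))
        (iteratedDeriv (l + 1) (fun y : ℝ => exp (-y ^ 2)) x) x := by
      rw [iteratedDeriv_succ]
      exact (hsmooth.differentiable_iteratedDeriv l (by simp) x).hasDerivAt
    rw [integral_mul_deriv_eq_deriv_mul_of_integrable (fun x _ => p.hasDerivAt x)
      (fun x _ => hderiv x) (integrable_eval_mul_iteratedDeriv_exp_neg_sq p (l + 1))
      (integrable_eval_mul_iteratedDeriv_exp_neg_sq (derivative p) l)
      (integrable_eval_mul_iteratedDeriv_exp_neg_sq p l),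
      ih, ← Function.iterate_succ_apply, pow_succ]
    ring

lemma integral_eval_mul_physHermite_mul_exp_neg_sq (p : ℝ[X]) (l : ℕ) :
    ∫ x : ℝ, p.eval x * (physHermite l).eval x * exp (-x ^ 2)
      = ∫ x : ℝ, (derivative^[l] p).eval x * exp (-x ^ 2) := by
  have hsign : ((-1 : ℝ) ^ l) * (-1) ^ l = 1 := by rw [← mul_pow]; simp
  calc ∫ x : ℝ, p.eval x * (physHermite l).eval x * exp (-x ^ 2)
      = ∫ x : ℝ, (-1) ^ l * (p.eval x * iteratedDeriv l (fun y : ℝ => exp (-y ^ 2)) x) := by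
        congr 1 with x
        rw [iteratedDeriv_exp_neg_sq]
        linear_combination (-(p.eval x * (physHermite l).eval x * exp (-x ^ 2))) * hsign
    _ = ∫ x : ℝ, (derivative^[l] p).eval x * exp (-x ^ 2) := by
        rw [integral_const_mul, integral_eval_mul_iteratedDeriv_exp_neg_sq, ← mul_assoc, hsign,
          one_mul]

lemma integral_physHermite_mul_physHermite_mul_exp_neg_sq_of_lt {k l : ℕ} (h : k < l) :
    ∫ x : ℝ, (physHermite k).eval x * (physHermite l).eval x * exp (-x ^ 2) = 0 := by
  rw [integral_eval_mul_physHermite_mul_exp_neg_sq,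
    iterate_derivative_eq_zero ((natDegree_physHermite_le k).trans_lt h)]
  simp

lemma integral_physHermite_mul_physHermite_mul_exp_neg_sq (k l : ℕ) :
    ∫ x : ℝ, (physHermite k).eval x * (physHermite l).eval x * exp (-x ^ 2)
      = if k = l then 2 ^ k * k.factorial * √π else 0 := by
  split_ifs with h
  · subst h
    have hgauss : ∫ x : ℝ, exp (-x ^ 2) = √π := by simpa using integral_gaussian 1
    simp_rw [integral_eval_mul_physHermite_mul_exp_neg_sq, iterate_derivative_physHermite_self,
      eval_C, integral_const_mul, hgauss]
  · rcases Nat.lt_or_gt_of_ne h with h | h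
    · exact integral_physHermite_mul_physHermite_mul_exp_neg_sq_of_lt h
    · simp_rw [mul_comm ((physHermite k).eval _)]
      exact integral_physHermite_mul_physHermite_mul_exp_neg_sq_of_lt h

theorem hermiteFun_orthonormal (k l : ℕ) :
    ∫ x : ℝ, hermiteFun k x * hermiteFun l x = if k = l then (1 : ℝ) else 0 := by
  set c : ℕ → ℝ := fun n => 2 ^ n * n.factorial * √π with hc
  have hprod (x : ℝ) : hermiteFun k x * hermiteFun l x = (√(c k))⁻¹ * ((√(c l))⁻¹ *
      ((physHermite k).eval x * (physHermite l).eval x * exp (-x ^ 2))) := by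
    have hexp : exp (-x ^ 2 / 2) * exp (-x ^ 2 / 2) = exp (-x ^ 2) := by
      rw [← exp_add]; ring_nf
    simp only [hermiteFun, hermitePoly_eq_eval_physHermite, hc, ← hexp]
    ring
  simp_rw [hprod, integral_const_mul, integral_physHermite_mul_physHermite_mul_exp_neg_sq]
  split_ifs with h
  · subst h
    have hpos : 0 < c k := by positivity
    show (√(c k))⁻¹ * ((√(c k))⁻¹ * c k) = 1
    rw [← mul_assoc, ← mul_inv, mul_self_sqrt hpos.le, inv_mul_cancel₀ hpos.ne']
  · simp
end

section
/- Let X be a real-valued random variable with probability density function f (a nonnegative integrable function on ℝ) and cumulative distribution function F(x) = ∫_{−∞}^{x} f(t) dt. Let ε > 0 and L > 0, and suppose F(−L) ≤ ε/2 and F(L) ≥ 1 − ε. Let f̂ : ℝ → ℝ be an integrable function satisfying |f̂(y) − f(y)| ≤ ε/(4L) for all y ∈ [−L, L]. Define F̂ : ℝ → ℝ by F̂(x) = 0 for x < −L, F̂(x) = ∫_{−L}^{x} f̂(t) dt for −L ≤ x < L, and F̂(x) = 1 for x ≥ L. Then |F̂(x) − F(x)| ≤ ε for every real x. -/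
open Real MeasureTheory

set_option maxHeartbeats 1000000

theorem cdf_approx_global
    (f : ℝ → ℝ) (hf_nonneg : ∀ t, 0 ≤ f t) (hf_int : Integrable f)
    (hf_one : ∫ t : ℝ, f t = 1)
    (F : ℝ → ℝ) (hF : ∀ x, F x = ∫ t in Set.Iic x, f t)
    (ε L : ℝ) (hε : 0 < ε) (hL : 0 < L)
    (hFnegL : F (-L) ≤ ε / 2) (hFL : 1 - ε ≤ F L)
    (fhat : ℝ → ℝ) (hfhat_int : Integrable fhat)
    (hclose : ∀ y ∈ Set.Icc (-L) L, |fhat y - f y| ≤ ε / (4 * L))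
    (Fhat : ℝ → ℝ)
    (hFhat : ∀ x, Fhat x =
      if x < -L then 0 else if x < L then ∫ t in (-L)..x, fhat t else 1) :
    ∀ x : ℝ, |Fhat x - F x| ≤ ε := by
  have hF_nonneg : ∀ x, 0 ≤ F x := by
    intro x
    rw [hF]
    exact setIntegral_nonneg measurableSet_Iic (fun t _ => hf_nonneg t)
  have hF_le_one : ∀ x, F x ≤ 1 := by
    intro x
    rw [hF, ← hf_one]
    exact setIntegral_le_integral hf_int (Filter.Eventually.of_forall hf_nonneg)
  have hF_mono : ∀ a b : ℝ, a ≤ b → F a ≤ F b := by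
    intro a b hab
    rw [hF, hF]
    exact setIntegral_mono_set hf_int.integrableOn
      (Filter.Eventually.of_forall hf_nonneg)
      (HasSubset.Subset.eventuallyLE (Set.Iic_subset_Iic.mpr hab))
  intro x
  rw [hFhat]
  by_cases h1 : x < -L
  · rw [if_pos h1]
    rw [abs_sub_comm, abs_of_nonneg (by simpa using hF_nonneg x)]
    have := hF_mono x (-L) h1.le
    linarith
  · by_cases h2 : x < L
    · rw [if_neg h1, if_pos h2]
      push_neg at h1
      have hdiff : F x - F (-L) = ∫ t in (-L)..x, f t := by
        rw [hF, hF]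
        exact intervalIntegral.integral_Iic_sub_Iic hf_int.integrableOn
          hf_int.integrableOn
      have hsplit : (∫ t in (-L)..x, fhat t) - ∫ t in (-L)..x, f t
          = ∫ t in (-L)..x, (fhat t - f t) := by
        rw [intervalIntegral.integral_sub hfhat_int.intervalIntegrable
          hf_int.intervalIntegrable]
      have hbound : |∫ t in (-L)..x, (fhat t - f t)| ≤ ε / (4 * L) * |x - (-L)| := by
        rw [← Real.norm_eq_abs]
        apply intervalIntegral.norm_integral_le_of_norm_le_const
        intro y hy
        rw [Set.uIoc_of_le h1] at hy
        exact hclose y ⟨hy.1.le, hy.2.trans h2.le⟩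
      have habs : |x - (-L)| ≤ 2 * L := by
        rw [abs_of_nonneg (by linarith)]; linarith
      have hεL : 0 ≤ ε / (4 * L) := by positivity
      have : ε / (4 * L) * (2 * L) = ε / 2 := by field_simp; ring
      calc |(∫ t in (-L)..x, fhat t) - F x|
          = |(∫ t in (-L)..x, (fhat t - f t)) - F (-L)| := by
            congr 1; linarith [hsplit, hdiff]
        _ ≤ |∫ t in (-L)..x, (fhat t - f t)| + |F (-L)| := abs_sub _ _
        _ ≤ ε / (4 * L) * (2 * L) + ε / 2 := by
            have := abs_of_nonneg (hF_nonneg (-L))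
            have h3 := mul_le_mul_of_nonneg_left habs hεL
            linarith [hbound.trans h3]
        _ ≤ ε := by linarith
    · rw [if_neg h1, if_neg h2]
      push_neg at h2
      have := hF_mono L x h2
      have := hF_le_one x
      rw [abs_le]
      constructor <;> linarith
end
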